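/- (Unbiasedness of CDR.) Given any reward model q̂_r : 𝒳 → 𝒜 → ℝ, define the single-sample CDR value f_CDR(x,A,ω) := ∑_{a∈𝒜} [ w(x,a)·( C(ω,a)·R(ω,a) − p_c(x,a,A)·q̂_r(x,a) ) + p_c(x,a,π)·q̂_r(x,a) ], where w(x,a) := p_c(x,a,π)/p_c(x,a,π₀) with the convention t/0 := 0. Under the independence of potential rewards condition, the click–reward factorization condition, and the click-wise common support condition, CDR is unbiased regardless of the reward model: E_{x∼p, A∼π₀(x), ω∼κ(x,A)}[f_CDR(x,A,ω)] = V(π). -/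

import Mathlib

open scoped BigOperators Classical

/-- Expectation of a real-valued function under a PMF on a finite type. -/
noncomputable def pexp {X : Type*} [Fintype X] (p : PMF X) (f : X → ℝ) : ℝ :=
  ∑ x, (p x).toReal * f x

/-- Variance of a real-valued function under a PMF on a finite type. -/
noncomputable def pvar {X : Type*} [Fintype X] (p : PMF X) (f : X → ℝ) : ℝ :=
  pexp p (fun x => (f x - pexp p f) ^ 2)

/-- Joint distribution of one logged sample (x, A, ω) with x ∼ p, A ∼ π₀(x), ω ∼ κ(x,A). -/
noncomputable def logged {𝒳 ℛ Ω : Type*} (p : PMF 𝒳) (π₀ : 𝒳 → PMF ℛ)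
    (κ : 𝒳 → ℛ → PMF Ω) : PMF (𝒳 × ℛ × Ω) :=
  p.bind fun x => (π₀ x).bind fun A => (κ x A).map fun ω => (x, A, ω)

/-- Click probability of action a at context x given ranking A: p_c(x,a,A). -/
noncomputable def pcA {𝒳 ℛ Ω 𝒜 : Type*} [Fintype Ω]
    (κ : 𝒳 → ℛ → PMF Ω) (C : Ω → 𝒜 → ℝ) (x : 𝒳) (a : 𝒜) (A : ℛ) : ℝ :=
  pexp (κ x A) fun ω => C ω a

/-- Marginalized click probability of action a at context x under policy μ: p_c(x,a,μ). -/
noncomputable def pcPol {𝒳 ℛ Ω 𝒜 : Type*} [Fintype Ω] [Fintype ℛ]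
    (κ : 𝒳 → ℛ → PMF Ω) (C : Ω → 𝒜 → ℝ) (μ : 𝒳 → PMF ℛ) (x : 𝒳) (a : 𝒜) : ℝ :=
  pexp (μ x) fun A => pcA κ C x a A

/-- Policy value V(π). -/
noncomputable def polValue {𝒳 ℛ Ω 𝒜 : Type*} [Fintype 𝒳] [Fintype ℛ] [Fintype Ω] [Fintype 𝒜]
    (p : PMF 𝒳) (π : 𝒳 → PMF ℛ) (κ : 𝒳 → ℛ → PMF Ω) (C R : Ω → 𝒜 → ℝ) : ℝ :=
  pexp p fun x => pexp (π x) fun A => pexp (κ x A) fun ω => ∑ a, C ω a * R ω a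

/-!
Average the CDR term of one action in three stages. Over the reward outcome ω, click–reward
factorization turns `C·R` into `p_c(x,a,A)·q_r(x,a)`, so the correction term becomes
`w·p_c(x,a,A)·(q_r − q̂_r)`. Over the logged ranking `A ∼ π₀(x)` this becomes
`w·p_c(x,a,π₀)·(q_r − q̂_r)`, and `w·p_c(x,a,π₀) = p_c(x,a,π)` by common support (both sides vanish
when `p_c(x,a,π₀) = 0`). The reward-model terms then cancel, leaving `p_c(x,a,π)·q_r(x,a)`, which
is also what factorization makes of the policy value.
-/

section pexp

variable {X : Type*} [Fintype X] (p : PMF X)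

lemma pexp_congr {f g : X → ℝ} (h : ∀ x, f x = g x) : pexp p f = pexp p g := by
  rw [funext h]

lemma PMF.sum_toReal_eq_one : ∑ x, (p x).toReal = 1 := by
  have h := congrArg ENNReal.toReal p.tsum_coe
  rwa [tsum_fintype, ENNReal.toReal_sum fun x _ => p.apply_ne_top x, ENNReal.toReal_one] at h

lemma pexp_const (c : ℝ) : pexp p (fun _ => c) = c := by
  rw [pexp, ← Finset.sum_mul, p.sum_toReal_eq_one, one_mul]

lemma pexp_add (f g : X → ℝ) : pexp p (fun x => f x + g x) = pexp p f + pexp p g := by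
  simp only [pexp, mul_add, Finset.sum_add_distrib]

lemma pexp_const_mul (c : ℝ) (f : X → ℝ) : pexp p (fun x => c * f x) = c * pexp p f := by
  simp only [pexp, Finset.mul_sum, mul_left_comm]

lemma pexp_mul_const (f : X → ℝ) (c : ℝ) : pexp p (fun x => f x * c) = pexp p f * c := by
  simp only [pexp, Finset.sum_mul, mul_assoc]

lemma pexp_sum {I : Type*} [Fintype I] (f : I → X → ℝ) :
    pexp p (fun x => ∑ i, f i x) = ∑ i, pexp p (f i) := by
  simp only [pexp, Finset.mul_sum]
  exact Finset.sum_comm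

lemma pexp_bind {Y : Type*} [Fintype Y] (f : X → PMF Y) (g : Y → ℝ) :
    pexp (p.bind f) g = pexp p (fun x => pexp (f x) g) := by
  have bind_toReal : ∀ y, ((p.bind f) y).toReal = ∑ x, (p x).toReal * (f x y).toReal := by
    intro y
    rw [PMF.bind_apply, tsum_fintype,
      ENNReal.toReal_sum fun x _ => ENNReal.mul_ne_top (p.apply_ne_top x) ((f x).apply_ne_top y)]
    simp only [ENNReal.toReal_mul]
  simp only [pexp, bind_toReal, Finset.sum_mul, Finset.mul_sum, mul_assoc]
  exact Finset.sum_comm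

lemma pexp_map {Y : Type*} [Fintype Y] (g : X → Y) (f : Y → ℝ) :
    pexp (p.map g) f = pexp p (fun x => f (g x)) := by
  rw [PMF.map, pexp_bind]
  refine pexp_congr p fun x => ?_
  simp [pexp, PMF.pure_apply, apply_ite ENNReal.toReal, ite_mul]

lemma pexp_nonneg {f : X → ℝ} (hf : ∀ x, 0 ≤ f x) : 0 ≤ pexp p f :=
  Finset.sum_nonneg fun x _ => mul_nonneg ENNReal.toReal_nonneg (hf x)

end pexp

lemma pexp_logged {𝒳 ℛ Ω : Type*} [Fintype 𝒳] [Fintype ℛ] [Fintype Ω] (p : PMF 𝒳)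
    (π₀ : 𝒳 → PMF ℛ) (κ : 𝒳 → ℛ → PMF Ω) (f : 𝒳 × ℛ × Ω → ℝ) :
    pexp (logged p π₀ κ) f =
      pexp p fun x => pexp (π₀ x) fun A => pexp (κ x A) fun ω => f (x, A, ω) := by
  simp only [logged, pexp_bind, pexp_map]

section clicks

variable {𝒳 ℛ Ω 𝒜 : Type*} [Fintype ℛ] [Fintype Ω]
  (κ : 𝒳 → ℛ → PMF Ω) (C R : Ω → 𝒜 → ℝ) (q_r : 𝒳 → 𝒜 → ℝ)

lemma pcPol_nonneg (hC : ∀ ω a, 0 ≤ C ω a) (μ : 𝒳 → PMF ℛ) (x : 𝒳) (a : 𝒜) :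
    0 ≤ pcPol κ C μ x a :=
  pexp_nonneg _ fun _ => pexp_nonneg _ fun ω => hC ω a

lemma pexp_pcA (μ : 𝒳 → PMF ℛ) (x : 𝒳) (a : 𝒜) (c : ℝ) :
    pexp (μ x) (fun A => pcA κ C x a A * c) = pcPol κ C μ x a * c :=
  pexp_mul_const _ _ _

lemma polValue_eq_of_factorization [Fintype 𝒳] [Fintype 𝒜] (p : PMF 𝒳) (π : 𝒳 → PMF ℛ)
    (hfact : ∀ x a A, pexp (κ x A) (fun ω => C ω a * R ω a) = pcA κ C x a A * q_r x a) :
    polValue p π κ C R = pexp p fun x => ∑ a, pcPol κ C π x a * q_r x a := by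
  simp only [polValue, pexp_sum, hfact, pexp_pcA]

lemma pexp_cdr_action (π π₀ : 𝒳 → PMF ℛ) (x : 𝒳) (a : 𝒜) (qhat : ℝ)
    (hfact : ∀ A, pexp (κ x A) (fun ω => C ω a * R ω a) = pcA κ C x a A * q_r x a)
    (hsupp : pcPol κ C π₀ x a = 0 → pcPol κ C π x a = 0) :
    pexp (π₀ x) (fun A => pexp (κ x A) fun ω =>
        pcPol κ C π x a / pcPol κ C π₀ x a * (C ω a * R ω a - pcA κ C x a A * qhat)
          + pcPol κ C π x a * qhat)
      = pcPol κ C π x a * q_r x a := by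
  set w := pcPol κ C π x a / pcPol κ C π₀ x a
  set c := pcPol κ C π x a * qhat
  have over_ω : ∀ A, pexp (κ x A) (fun ω => w * (C ω a * R ω a - pcA κ C x a A * qhat) + c)
      = w * (pcA κ C x a A * (q_r x a - qhat)) + c := by
    intro A
    simp only [sub_eq_add_neg, pexp_add, pexp_const_mul, pexp_const, hfact]
    ring
  calc _ = pexp (π₀ x) (fun A => w * (pcA κ C x a A * (q_r x a - qhat)) + c) :=
        pexp_congr _ over_ω
    _ = w * pcPol κ C π₀ x a * (q_r x a - qhat) + c := by
        rw [pexp_add, pexp_const_mul, pexp_pcA, pexp_const, mul_assoc]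
    _ = pcPol κ C π x a * q_r x a := by
        rw [div_mul_cancel_of_imp hsupp]
        ring

end clicks

theorem CDR_unbiased_general {𝒳 ℛ Ω 𝒜 : Type*}
    [Fintype 𝒳] [Fintype ℛ] [Fintype Ω] [Fintype 𝒜]
    (p : PMF 𝒳) (π π₀ : 𝒳 → PMF ℛ) (κ : 𝒳 → ℛ → PMF Ω)
    (C R : Ω → 𝒜 → ℝ) (hC : ∀ ω a, C ω a = 0 ∨ C ω a = 1)
    (q_r : 𝒳 → 𝒜 → ℝ)
    (hfact : ∀ x a A,
      pexp (κ x A) (fun ω => C ω a * R ω a) = pcA κ C x a A * q_r x a)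
    (hsupp : ∀ x a, 0 < pcPol κ C π x a → 0 < pcPol κ C π₀ x a)
    (qhat : 𝒳 → 𝒜 → ℝ) :
    pexp (logged p π₀ κ)
        (fun s => ∑ a,
          ((pcPol κ C π s.1 a / pcPol κ C π₀ s.1 a) *
              (C s.2.2 a * R s.2.2 a - pcA κ C s.1 a s.2.1 * qhat s.1 a)
            + pcPol κ C π s.1 a * qhat s.1 a))
    = polValue p π κ C R := by
  have hC_nonneg : ∀ ω a, 0 ≤ C ω a := fun ω a => by rcases hC ω a with h | h <;> simp [h]
  have hsupp_zero : ∀ x a, pcPol κ C π₀ x a = 0 → pcPol κ C π x a = 0 := fun x a h₀ =>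
    ((pcPol_nonneg κ C hC_nonneg π x a).eq_of_not_lt fun hpos => (hsupp x a hpos).ne' h₀).symm
  rw [pexp_logged, polValue_eq_of_factorization κ C R q_r p π hfact]
  refine pexp_congr p fun x => ?_
  simp only [pexp_sum]
  exact Finset.sum_congr rfl fun a _ =>
    pexp_cdr_action κ C R q_r π π₀ x a (qhat x a) (hfact x a) (hsupp_zero x a)

/-- Unbiasedness of CDR, regardless of the reward model. -/
theorem CDR_unbiased {𝒳 ℛ Ω 𝒜 : Type*}
    [Fintype 𝒳] [Nonempty 𝒳] [Fintype ℛ] [Nonempty ℛ] [Fintype Ω] [Nonempty Ω] [Fintype 𝒜]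
    (p : PMF 𝒳) (π π₀ : 𝒳 → PMF ℛ) (κ : 𝒳 → ℛ → PMF Ω)
    (C R : Ω → 𝒜 → ℝ) (hC : ∀ ω a, C ω a = 0 ∨ C ω a = 1)
    (q_r : 𝒳 → 𝒜 → ℝ)
    (hind : ∀ x a A, pexp (κ x A) (fun ω => R ω a) = q_r x a)
    (hfact : ∀ x a A,
      pexp (κ x A) (fun ω => C ω a * R ω a) = pcA κ C x a A * q_r x a)
    (hsupp : ∀ x a, 0 < pcPol κ C π x a → 0 < pcPol κ C π₀ x a)
    (qhat : 𝒳 → 𝒜 → ℝ) :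
    pexp (logged p π₀ κ)
        (fun s => ∑ a,
          ((pcPol κ C π s.1 a / pcPol κ C π₀ s.1 a) *
              (C s.2.2 a * R s.2.2 a - pcA κ C s.1 a s.2.1 * qhat s.1 a)
            + pcPol κ C π s.1 a * qhat s.1 a))
    = polValue p π κ C R :=
  CDR_unbiased_general p π π₀ κ C R hC q_r hfact hsupp qhat
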